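/- Fix h > 0, t > 0, and a positive integer D. Let G : ℝ^D → ℝ be Lipschitz continuous with Lipschitz constant L (i.e., |G(x) − G(y)| ≤ L·‖x − y‖ for all x, y, with ‖·‖ the Euclidean norm), and let f : ℝ → ℝ^D be piecewise constant and right-continuous on [0, t]: there exist points 0 = t₀ < t₁ < … < t_N = t and values c₀, …, c_N ∈ ℝ^D such that f(s) = c_k for s ∈ [t_k, t_{k+1}) (k = 0, …, N − 1) and f(t) = c_N. Then |∫₀ᵗ σ_h(s)·G(f(s)) ds| ≤ (h/2)·|G(f(t))| + (h/2)·L·∑_{k=1}^{N} ‖c_k − c_{k−1}‖. Moreover, if t is an integer multiple of h, then the first term can be dropped. -/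

import Mathlib

/-!
With `S s = ∫₀ˢ σ_h`, a triangle wave with values in `[0, h/2]` vanishing at the multiples
of `h`, the integral over the piece `[t_k, t_{k+1})` is `G c_k · (S t_{k+1} - S t_k)`.
Summation by parts rewrites the sum as `G c_N · S t - ∑ (G c_{k+1} - G c_k) · S t_{k+1}`,
and the Lipschitz bound on the increments of `G` finishes the estimate.
-/

open MeasureTheory

/-- The split-step kernel `σ_h(t) = 1 − 2·(⌊t/(h/2)⌋ mod 2)`: a piecewise constant
right-continuous function taking only the values `+1` and `−1`, switching value at
integer multiples of `h/2`. -/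
noncomputable def splitKernel (h t : ℝ) : ℝ := 1 - 2 * ((⌊t / (h / 2)⌋ % 2 : ℤ) : ℝ)

open Set intervalIntegral

theorem Finset.sum_Icc_one_eq_sum_range {M : Type*} [AddCommMonoid M] (f : ℕ → M) (N : ℕ) :
    ∑ k ∈ Finset.Icc 1 N, f k = ∑ k ∈ Finset.range N, f (k + 1) := by
  rw [Finset.range_eq_Ico, Finset.sum_Ico_add' f 0 N 1]
  rfl

theorem integral_smul_eq_sum_of_eqOn_Ico {E : Type*} [NormedAddCommGroup E] [NormedSpace ℝ E]
    [CompleteSpace E] {φ : ℝ → ℝ} (hφ : ∀ a b, IntervalIntegrable φ volume a b)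
    {F : ℝ → E} {N : ℕ} {τ : ℕ → ℝ} {v : ℕ → E} (hτ : ∀ k < N, τ k ≤ τ (k + 1))
    (hF : ∀ k < N, EqOn F (fun _ => v k) (Ico (τ k) (τ (k + 1)))) :
    ∫ s in τ 0..τ N, φ s • F s = ∑ k ∈ Finset.range N, (∫ s in τ k..τ (k + 1), φ s) • v k := by
  have hpiece : ∀ k < N, EqOn (fun s => φ s • v k) (fun s => φ s • F s) (Ioo (τ k) (τ (k + 1))) :=
    fun k hk s hs => by simp only [hF k hk (Ioo_subset_Ico_self hs)]
  have hint : ∀ k < N, IntervalIntegrable (fun s => φ s • F s) volume (τ k) (τ (k + 1)) :=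
    fun k hk => IntervalIntegrable.congr_uIoo
      ⟨(hφ _ _).1.smul_const (v k), (hφ _ _).2.smul_const (v k)⟩
      (uIoo_of_le (hτ k hk) ▸ hpiece k hk)
  rw [← sum_integral_adjacent_intervals hint]
  refine Finset.sum_congr rfl fun k hk => ?_
  rw [← integral_congr_Ioo_of_le (hτ k (Finset.mem_range.1 hk)) (hpiece k (Finset.mem_range.1 hk)),
    intervalIntegral.integral_smul_const]

theorem Finset.sum_range_mul_sub_eq {R : Type*} [CommRing R] (g S : ℕ → R) (N : ℕ) :
    ∑ k ∈ Finset.range N, g k * (S (k + 1) - S k) =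
      g N * S N - g 0 * S 0 - ∑ k ∈ Finset.range N, (g (k + 1) - g k) * S (k + 1) := by
  induction N with
  | zero => simp
  | succ N ih => rw [Finset.sum_range_succ, Finset.sum_range_succ, ih]; ring

theorem abs_sum_mul_sub_le {g S : ℕ → ℝ} {M : ℝ} (N : ℕ) (hS₀ : S 0 = 0) (hS : ∀ k, |S k| ≤ M) :
    |∑ k ∈ Finset.range N, g k * (S (k + 1) - S k)| ≤
      |g N| * |S N| + M * ∑ k ∈ Finset.range N, |g (k + 1) - g k| := by
  rw [Finset.sum_range_mul_sub_eq, hS₀, mul_zero, sub_zero, Finset.mul_sum, ← abs_mul]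
  refine (abs_sub _ _).trans (add_le_add_right ((Finset.abs_sum_le_sum_abs _ _).trans
    (Finset.sum_le_sum fun k _ => ?_)) _)
  rw [abs_mul, mul_comm]
  exact mul_le_mul_of_nonneg_right (hS _) (abs_nonneg _)

section SplitKernel

variable {h : ℝ}

theorem measurable_splitKernel (h : ℝ) : Measurable (splitKernel h) :=
  measurable_const.sub <| ((measurable_of_countable fun m : ℤ => ((m % 2 : ℤ) : ℝ)).comp
    (Int.measurable_floor.comp (measurable_id.div_const _))).const_mul 2

theorem abs_splitKernel_le_one (h u : ℝ) : |splitKernel h u| ≤ 1 := by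
  rcases Int.emod_two_eq_zero_or_one ⌊u / (h / 2)⌋ with hm | hm <;>
    norm_num [splitKernel, hm]

theorem intervalIntegrable_splitKernel (h a b : ℝ) :
    IntervalIntegrable (splitKernel h) volume a b :=
  (intervalIntegrable_const (c := (1 : ℝ))).mono_fun (measurable_splitKernel h).aestronglyMeasurable
    (ae_of_all _ fun u => by simpa using abs_splitKernel_le_one h u)

theorem splitKernel_eq_of_mem_Ico (hh : 0 < h) {m : ℤ} {u : ℝ}
    (hu : u ∈ Ico (m * (h / 2)) ((m + 1) * (h / 2))) :
    splitKernel h u = 1 - 2 * ((m % 2 : ℤ) : ℝ) := by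
  have hfloor : ⌊u / (h / 2)⌋ = m := by
    rw [Int.floor_eq_iff, le_div_iff₀ (by positivity), div_lt_iff₀ (by positivity)]
    exact hu
  rw [splitKernel, hfloor]

theorem mem_Ico_floor_div_mul {p : ℝ} (hp : 0 < p) (s : ℝ) :
    s ∈ Ico (⌊s / p⌋ * p) ((⌊s / p⌋ + 1) * p) := by
  rw [mem_Ico, ← le_div_iff₀ hp, ← div_lt_iff₀ hp]
  exact ⟨Int.floor_le _, Int.lt_floor_add_one _⟩

theorem integral_splitKernel_of_mem_Icc (hh : 0 < h) {m : ℤ} {s : ℝ}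
    (hs : s ∈ Icc (m * (h / 2)) ((m + 1) * (h / 2))) :
    ∫ u in m * (h / 2)..s, splitKernel h u = (1 - 2 * ((m % 2 : ℤ) : ℝ)) * (s - m * (h / 2)) := by
  rw [integral_congr_Ioo_of_le hs.1 fun u hu =>
    splitKernel_eq_of_mem_Ico hh ⟨hu.1.le, hu.2.trans_le hs.2⟩,
    intervalIntegral.integral_const, smul_eq_mul, mul_comm]

theorem integral_splitKernel_int_mul_half (hh : 0 < h) (m : ℤ) :
    ∫ u in 0..m * (h / 2), splitKernel h u = ((m % 2 : ℤ) : ℝ) * (h / 2) := by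
  have step : ∀ m : ℤ, ∫ u in 0..((m + 1 : ℤ) : ℝ) * (h / 2), splitKernel h u =
      (∫ u in 0..m * (h / 2), splitKernel h u) + (1 - 2 * ((m % 2 : ℤ) : ℝ)) * (h / 2) := by
    intro m
    rw [← integral_add_adjacent_intervals (intervalIntegrable_splitKernel h _ (m * (h / 2)))
      (intervalIntegrable_splitKernel h _ _), Int.cast_add, Int.cast_one,
      integral_splitKernel_of_mem_Icc hh ⟨by nlinarith, le_rfl⟩]
    ring
  have parity : ∀ m : ℤ, (((m + 1) % 2 : ℤ) : ℝ) = 1 - ((m % 2 : ℤ) : ℝ) := fun m => by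
    rw [show (m + 1) % 2 = 1 - m % 2 by omega]; push_cast; ring
  let P : ℤ → Prop := fun m =>
    ∫ u in 0..m * (h / 2), splitKernel h u = ((m % 2 : ℤ) : ℝ) * (h / 2)
  have hP : ∀ m, P (m + 1) ↔ P m := fun m => by
    simp only [P, step, parity]
    constructor <;> intro H <;> linarith
  refine Int.induction_on (motive := P) m (by simp [P]) (fun i ih => (hP _).2 ih)
    fun i ih => (hP _).1 (by rwa [sub_add_cancel])

theorem integral_splitKernel_mem_Icc (hh : 0 < h) (s : ℝ) :
    ∫ u in 0..s, splitKernel h u ∈ Icc 0 (h / 2) := by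
  set m := ⌊s / (h / 2)⌋
  have hs := mem_Ico_floor_div_mul (half_pos hh) s
  rw [← integral_add_adjacent_intervals (intervalIntegrable_splitKernel h _ (m * (h / 2)))
    (intervalIntegrable_splitKernel h _ _), integral_splitKernel_int_mul_half hh,
    integral_splitKernel_of_mem_Icc hh (Ico_subset_Icc_self hs)]
  -- with `r = s - m * (h / 2) ∈ [0, h / 2)`, the value is `r` for even `m`, `h / 2 - r` for odd `m`
  rcases Int.emod_two_eq_zero_or_one m with hm | hm <;> rw [hm] <;> push_cast <;>
    constructor <;> nlinarith [hs.1, hs.2]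

theorem abs_integral_splitKernel_le (hh : 0 < h) (s : ℝ) :
    |∫ u in 0..s, splitKernel h u| ≤ h / 2 :=
  have hs := integral_splitKernel_mem_Icc hh s
  (abs_of_nonneg hs.1).trans_le hs.2

theorem integral_splitKernel_int_mul (hh : 0 < h) (n : ℤ) :
    ∫ u in 0..n * h, splitKernel h u = 0 := by
  rw [show (n : ℝ) * h = ((2 * n : ℤ) : ℝ) * (h / 2) by push_cast; ring,
    integral_splitKernel_int_mul_half hh, Int.mul_emod_right, Int.cast_zero, zero_mul]

end SplitKernel

theorem splitKernel_mul_lipschitz_piecewiseConst_integral_bound_general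
    (h t : ℝ) (hh : 0 < h)
    (D : ℕ)
    (G : EuclideanSpace ℝ (Fin D) → ℝ) (L : ℝ)
    (hG : ∀ x y : EuclideanSpace ℝ (Fin D), |G x - G y| ≤ L * ‖x - y‖)
    (N : ℕ) (tt : ℕ → ℝ) (c : ℕ → EuclideanSpace ℝ (Fin D))
    (f : ℝ → EuclideanSpace ℝ (Fin D))
    (htt0 : tt 0 = 0) (httN : tt N = t)
    (htt : ∀ k < N, tt k < tt (k + 1))
    (hf : ∀ k < N, ∀ s ∈ Set.Ico (tt k) (tt (k + 1)), f s = c k)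
    (hft : f t = c N) :
    |∫ s in (0:ℝ)..t, splitKernel h s * G (f s)| ≤
        h / 2 * |G (f t)| + h / 2 * L * ∑ k ∈ Finset.Icc 1 N, ‖c k - c (k - 1)‖ ∧
      ((∃ n : ℕ, t = n * h) →
        |∫ s in (0:ℝ)..t, splitKernel h s * G (f s)| ≤
          h / 2 * L * ∑ k ∈ Finset.Icc 1 N, ‖c k - c (k - 1)‖) := by
  set S : ℝ → ℝ := fun s => ∫ u in (0:ℝ)..s, splitKernel h u
  have hsum : ∫ s in (0:ℝ)..t, splitKernel h s * G (f s) =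
      ∑ k ∈ Finset.range N, G (c k) * (S (tt (k + 1)) - S (tt k)) := by
    have := integral_smul_eq_sum_of_eqOn_Ico (intervalIntegrable_splitKernel h) (F := G ∘ f)
      (v := G ∘ c) (fun k hk => (htt k hk).le) fun k hk s hs => congrArg G (hf k hk s hs)
    rw [htt0, httN] at this
    simp only [smul_eq_mul, Function.comp_apply] at this
    rw [this]
    refine Finset.sum_congr rfl fun k _ => ?_
    rw [← integral_interval_sub_left (intervalIntegrable_splitKernel h _ _)
      (intervalIntegrable_splitKernel h _ _), mul_comm]
  have hbound := abs_sum_mul_sub_le (g := G ∘ c) (S := S ∘ tt) N (by simp [S, htt0])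
    fun k => abs_integral_splitKernel_le hh (tt k)
  simp only [Function.comp_apply, ← hsum, httN, ← hft] at hbound
  have hvar : ∑ k ∈ Finset.range N, |G (c (k + 1)) - G (c k)| ≤
      L * ∑ k ∈ Finset.Icc 1 N, ‖c k - c (k - 1)‖ := by
    rw [Finset.sum_Icc_one_eq_sum_range, Finset.mul_sum]
    exact Finset.sum_le_sum fun k _ => hG _ _
  constructor
  · calc _ ≤ _ := hbound
      _ ≤ |G (f t)| * (h / 2) + h / 2 * (L * ∑ k ∈ Finset.Icc 1 N, ‖c k - c (k - 1)‖) := by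
        gcongr
        exact abs_integral_splitKernel_le hh t
      _ = _ := by ring
  · rintro ⟨n, rfl⟩
    have hS : S (n * h) = 0 := by simpa using integral_splitKernel_int_mul hh n
    rw [hS, abs_zero, mul_zero, zero_add] at hbound
    rw [mul_assoc]
    exact hbound.trans (mul_le_mul_of_nonneg_left hvar (by positivity))

/-- For `G : ℝ^D → ℝ` Lipschitz with constant `L` (Euclidean norm)
and a piecewise constant right-continuous `f : ℝ → ℝ^D` on `[0,t]` with jump points
`0 = t₀ < t₁ < … < t_N = t` and values `c₀, …, c_N`, one has
`|∫₀ᵗ σ_h(s)·G(f(s)) ds| ≤ (h/2)·|G(f(t))| + (h/2)·L·∑_{k=1}^N ‖c_k − c_{k−1}‖`, and if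
`t` is an integer multiple of `h` then the first term may be dropped. -/
theorem splitKernel_mul_lipschitz_piecewiseConst_integral_bound
    (h t : ℝ) (hh : 0 < h) (ht : 0 < t)
    (D : ℕ) (hD : 1 ≤ D)
    (G : EuclideanSpace ℝ (Fin D) → ℝ) (L : ℝ)
    (hG : ∀ x y : EuclideanSpace ℝ (Fin D), |G x - G y| ≤ L * ‖x - y‖)
    (N : ℕ) (tt : ℕ → ℝ) (c : ℕ → EuclideanSpace ℝ (Fin D))
    (f : ℝ → EuclideanSpace ℝ (Fin D))
    (htt0 : tt 0 = 0) (httN : tt N = t)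
    (htt : ∀ k < N, tt k < tt (k + 1))
    (hf : ∀ k < N, ∀ s ∈ Set.Ico (tt k) (tt (k + 1)), f s = c k)
    (hft : f t = c N) :
    |∫ s in (0:ℝ)..t, splitKernel h s * G (f s)| ≤
        h / 2 * |G (f t)| + h / 2 * L * ∑ k ∈ Finset.Icc 1 N, ‖c k - c (k - 1)‖ ∧
      ((∃ n : ℕ, t = n * h) →
        |∫ s in (0:ℝ)..t, splitKernel h s * G (f s)| ≤
          h / 2 * L * ∑ k ∈ Finset.Icc 1 N, ‖c k - c (k - 1)‖) :=
  splitKernel_mul_lipschitz_piecewiseConst_integral_bound_general h t hh D G L hG N tt c f htt0 httN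
    htt hf hft
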